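/- One has Σ_{i=1}^N α_i² ≤ f(α) · ( Σ_{i,k,j=1}^N α_i (L + hI − iα)^{-1}_{ik} (L + hI + iα)^{-1}_{kj} α_j )^{1/2}, where f(α) = ( αᵗ((L + hI)² + α²)α )^{1/2} with α viewed also as the vector (α_1,…,α_N); moreover f(α) ≤ ( Σ_{i=1}^N ( α_i² (l_max + h)² + α_i⁴ ) )^{1/2}, where l_max is the largest eigenvalue of L. -/

import Mathlib

open Matrix

/-!
Put `M = L + hI - iα`, invertible since its Hermitian part `L + hI` is positive definite, and
`u = M α`, `w = αᵀ M⁻¹`. As `α` is real and `(Mᴴ)⁻¹ = (M⁻¹)ᴴ`, the triple sum is `‖w‖²`; as `L`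
is symmetric, `‖u‖² = αᵀ((L + hI)² + α²)α`; and `Σ αᵢ² = w ⬝ u`, so the first inequality is
Cauchy–Schwarz. The second holds because the spectrum of `L + hI` lies in `[h, l_max + h]`, so
`(L + hI)² ≤ (l_max + h)² I`.
-/

theorem Complex.re_dotProduct_le_sqrt_mul_sqrt {n : Type*} [Fintype n] (u w : n → ℂ) :
    (u ⬝ᵥ w).re ≤ √(∑ k, Complex.normSq (u k)) * √(∑ k, Complex.normSq (w k)) := by
  simp_rw [← Complex.sq_norm]
  calc (u ⬝ᵥ w).re = ∑ k, (u k * w k).re := Complex.re_sum _ _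
    _ ≤ ∑ k, ‖u k‖ * ‖w k‖ :=
      Finset.sum_le_sum fun k _ => (Complex.re_le_norm _).trans_eq (norm_mul _ _)
    _ ≤ _ := Real.sum_mul_le_sqrt_mul_sqrt _ _ _

namespace Matrix

variable {n : Type*} [Fintype n]

theorem dotProduct_transpose_mul_mulVec {R : Type*} [CommSemiring R] (B : Matrix n n R)
    (x : n → R) : x ⬝ᵥ (Bᵀ * B) *ᵥ x = (B *ᵥ x) ⬝ᵥ (B *ᵥ x) := by
  rw [← mulVec_mulVec, dotProduct_mulVec, vecMul_transpose]

section ComplexOrder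

open scoped ComplexOrder

theorem PosSemidef.map_ofReal {L : Matrix n n ℝ} (hL : L.PosSemidef) :
    (L.map (fun x => (x : ℂ))).PosSemidef := by
  classical
  obtain ⟨B, rfl⟩ : ∃ B : Matrix n n ℝ, L = Bᴴ * B := by
    open scoped MatrixOrder in exact CStarAlgebra.nonneg_iff_eq_star_mul_self.mp hL.nonneg
  change ((Bᴴ * B).map Complex.ofRealHom).PosSemidef
  rw [Matrix.map_mul, conjTranspose_map _ fun x => by simp]
  exact posSemidef_conjTranspose_mul_self (B.map Complex.ofRealHom)

theorem PosDef.isUnit_det_sub_I_smul [DecidableEq n] {A H : Matrix n n ℂ} (hA : A.PosDef)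
    (hH : H.IsHermitian) : IsUnit (A - Complex.I • H).det := by
  rw [isUnit_iff_ne_zero]
  intro hdet
  obtain ⟨v, hv, hker⟩ := exists_mulVec_eq_zero_iff.mpr hdet
  have hsplit : star v ⬝ᵥ A *ᵥ v = Complex.I * (star v ⬝ᵥ H *ᵥ v) := by
    rw [sub_mulVec, smul_mulVec, sub_eq_zero] at hker
    rw [hker, dotProduct_smul, smul_eq_mul]
  have hpos := hA.re_dotProduct_pos hv
  have hreal := hH.im_star_dotProduct_mulVec_self v
  simp only [RCLike.re_to_complex, RCLike.im_to_complex] at hpos hreal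
  rw [hsplit, Complex.mul_re, Complex.I_re, Complex.I_im, hreal] at hpos
  simp at hpos

end ComplexOrder

theorem sum_sum_sum_mul_conjTranspose_mul (B : Matrix n n ℂ) (a : n → ℝ) :
    ∑ i, ∑ k, ∑ j, (a i : ℂ) * B i k * Bᴴ k j * (a j : ℂ)
      = ∑ k, (Complex.normSq (((fun i => (a i : ℂ)) ᵥ* B) k) : ℂ) := by
  rw [Finset.sum_comm]
  refine Finset.sum_congr rfl fun k _ => ?_
  have hconj : ∑ j, Bᴴ k j * (a j : ℂ) = starRingEnd ℂ (((fun i => (a i : ℂ)) ᵥ* B) k) := by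
    simp [vecMul, dotProduct, map_sum, mul_comm]
  rw [Complex.normSq_eq_conj_mul_self, mul_comm, ← hconj]
  simp only [vecMul, dotProduct, Finset.sum_mul, Finset.mul_sum, mul_assoc]
  exact Finset.sum_comm

theorem sum_sq_le_sqrt_mul_sqrt_of_isUnit_det [DecidableEq n] {M : Matrix n n ℂ}
    (hM : IsUnit M.det) (a : n → ℝ) :
    ∑ i, a i ^ 2 ≤ √(∑ k, Complex.normSq ((M *ᵥ fun i => (a i : ℂ)) k))
      * √((∑ i, ∑ k, ∑ j, (a i : ℂ) * M⁻¹ i k * Mᴴ⁻¹ k j * (a j : ℂ)).re) := by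
  set ac : n → ℂ := fun i => (a i : ℂ)
  calc ∑ i, a i ^ 2 = ((ac ᵥ* M⁻¹) ⬝ᵥ (M *ᵥ ac)).re := by
        rw [← dotProduct_mulVec, mulVec_mulVec, nonsing_inv_mul _ hM, one_mulVec]
        simp [ac, dotProduct, sq]
    _ ≤ √(∑ k, Complex.normSq ((ac ᵥ* M⁻¹) k)) * √(∑ k, Complex.normSq ((M *ᵥ ac) k)) :=
        Complex.re_dotProduct_le_sqrt_mul_sqrt _ _
    _ = _ := by
        rw [mul_comm, ← conjTranspose_nonsing_inv, sum_sum_sum_mul_conjTranspose_mul,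
          Complex.re_sum]
        simp only [Complex.ofReal_re, ac]

theorem sum_normSq_sub_I_smul_diagonal_mulVec [DecidableEq n] (A : Matrix n n ℝ) (d a : n → ℝ) :
    ∑ k, Complex.normSq (((A.map (fun x => (x : ℂ)) - Complex.I • diagonal (fun i => (d i : ℂ)))
        *ᵥ (fun i => (a i : ℂ))) k)
      = a ⬝ᵥ (Aᵀ * A + diagonal d * diagonal d) *ᵥ a := by
  have hD : diagonal d * diagonal d = (diagonal d)ᵀ * diagonal d := by rw [diagonal_transpose]
  rw [add_mulVec, dotProduct_add, hD, dotProduct_transpose_mul_mulVec,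
    dotProduct_transpose_mul_mulVec, dotProduct, dotProduct, ← Finset.sum_add_distrib]
  refine Finset.sum_congr rfl fun k _ => ?_
  have hentry : ((A.map (fun x => (x : ℂ)) - Complex.I • diagonal (fun i => (d i : ℂ))) *ᵥ
        (fun i => (a i : ℂ))) k
      = ((A *ᵥ a) k : ℂ) - Complex.I * ((diagonal d *ᵥ a) k : ℝ) := by
    rw [sub_mulVec, Pi.sub_apply, smul_mulVec, Pi.smul_apply, mulVec_diagonal, mulVec_diagonal,
      smul_eq_mul]
    simp [mulVec, dotProduct]
  rw [hentry, Complex.normSq_apply]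
  simp

theorem IsHermitian.dotProduct_mul_self_mulVec_le [DecidableEq n] {A : Matrix n n ℝ}
    (hA : A.IsHermitian) {c : ℝ} (hc : ∀ μ ∈ spectrum ℝ A, |μ| ≤ c) (x : n → ℝ) :
    x ⬝ᵥ (A * A) *ᵥ x ≤ c ^ 2 * (x ⬝ᵥ x) := by
  open scoped MatrixOrder in
  have hle : A * A ≤ algebraMap ℝ (Matrix n n ℝ) (c ^ 2) := by
    rw [← sq, ← cfc_pow_id (R := ℝ) A 2 hA.isSelfAdjoint]
    exact cfc_le_algebraMap _ _ _ fun μ hμ => sq_le_sq.mpr ((hc μ hμ).trans (le_abs_self c))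
  simpa only [star_trivial, Algebra.algebraMap_eq_smul_one, sub_mulVec, smul_mulVec, one_mulVec,
    dotProduct_sub, dotProduct_smul, smul_eq_mul, sub_nonneg]
    using (Matrix.le_iff.mp hle).dotProduct_mulVec_nonneg x

theorem PosSemidef.dotProduct_add_smul_one_sq_mulVec_le [DecidableEq n] {L : Matrix n n ℝ}
    (hL : L.PosSemidef) {h lmax : ℝ} (hh : 0 ≤ h) (hlmax : ∀ i, hL.1.eigenvalues i ≤ lmax)
    (x : n → ℝ) :
    x ⬝ᵥ ((L + h • 1) * (L + h • 1)) *ᵥ x ≤ (lmax + h) ^ 2 * (x ⬝ᵥ x) := by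
  refine (hL.add (PosSemidef.one.smul hh)).1.dotProduct_mul_self_mulVec_le (fun μ hμ => ?_) x
  rw [← Algebra.algebraMap_eq_smul_one, ← spectrum.add_singleton_eq,
    hL.1.spectrum_real_eq_range_eigenvalues] at hμ
  obtain ⟨_, ⟨i, rfl⟩, _, rfl, rfl⟩ := hμ
  have := hL.eigenvalues_nonneg i
  have := hlmax i
  rw [abs_le]
  constructor <;> linarith

end Matrix

theorem alpha_squared_bound_general (N : ℕ)
    (L : Matrix (Fin N) (Fin N) ℝ) (hLpsd : L.PosSemidef)
    (h : ℝ) (hh : 0 < h) (α : Fin N → ℝ)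
    (lmax : ℝ) (hlmax : IsGreatest (Set.range hLpsd.1.eigenvalues) lmax) :
    (∑ i, (α i) ^ 2
      ≤ Real.sqrt (α ⬝ᵥ ((L + h • (1 : Matrix (Fin N) (Fin N) ℝ))
            * (L + h • (1 : Matrix (Fin N) (Fin N) ℝ))
          + Matrix.diagonal α * Matrix.diagonal α).mulVec α)
        * Real.sqrt ((∑ i, ∑ k, ∑ j, (α i : ℂ) *
            ((L.map (fun x => (x : ℂ)) + (h : ℂ) • 1
                - Complex.I • Matrix.diagonal (fun i => (α i : ℂ)))⁻¹ i k) *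
            ((L.map (fun x => (x : ℂ)) + (h : ℂ) • 1
                + Complex.I • Matrix.diagonal (fun i => (α i : ℂ)))⁻¹ k j) * (α j : ℂ)).re))
    ∧ Real.sqrt (α ⬝ᵥ ((L + h • (1 : Matrix (Fin N) (Fin N) ℝ))
            * (L + h • (1 : Matrix (Fin N) (Fin N) ℝ))
          + Matrix.diagonal α * Matrix.diagonal α).mulVec α)
      ≤ Real.sqrt (∑ i, ((α i) ^ 2 * (lmax + h) ^ 2 + (α i) ^ 4)) := by
  set A : Matrix (Fin N) (Fin N) ℝ := L + h • 1
  set M : Matrix (Fin N) (Fin N) ℂ :=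
    L.map (fun x => (x : ℂ)) + (h : ℂ) • 1 - Complex.I • diagonal (fun i => (α i : ℂ))
  have hMdet : IsUnit M.det := by
    refine PosDef.isUnit_det_sub_I_smul ?_ (isHermitian_diagonal_of_self_adjoint _ ?_)
    · open scoped ComplexOrder in
      exact PosDef.posSemidef_add hLpsd.map_ofReal (PosDef.one.smul (Complex.zero_lt_real.mpr hh))
    · ext i; simp
  have hMH : Mᴴ =
      L.map (fun x => (x : ℂ)) + (h : ℂ) • 1 + Complex.I • diagonal (fun i => (α i : ℂ)) := by
    rw [conjTranspose_sub, conjTranspose_add, hLpsd.map_ofReal.1.eq, conjTranspose_smul,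
      conjTranspose_one, conjTranspose_smul, diagonal_conjTranspose]
    simp [sub_eq_add_neg]
  have hnormSq : ∑ k, Complex.normSq ((M *ᵥ fun i => (α i : ℂ)) k)
      = α ⬝ᵥ (A * A + diagonal α * diagonal α) *ᵥ α := by
    have hMA : M = A.map (fun x => (x : ℂ)) - Complex.I • diagonal (fun i => (α i : ℂ)) := by
      simp [M, A, Matrix.map_add, Matrix.map_smul]
    have hAT : Aᵀ = A := (isHermitian_iff_isSymm.mp (hLpsd.add (PosSemidef.one.smul hh.le)).1).eq
    rw [hMA, sum_normSq_sub_I_smul_diagonal_mulVec, hAT]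
  refine ⟨?_, Real.sqrt_le_sqrt ?_⟩
  · simpa only [hnormSq, hMH] using sum_sq_le_sqrt_mul_sqrt_of_isUnit_det hMdet α
  · have hquad := hLpsd.dotProduct_add_smul_one_sq_mulVec_le hh.le (fun i => hlmax.2 ⟨i, rfl⟩) α
    have hdiag : α ⬝ᵥ (diagonal α * diagonal α) *ᵥ α = ∑ i, α i ^ 4 := by
      simp only [dotProduct, ← mulVec_mulVec, mulVec_diagonal]
      exact Finset.sum_congr rfl fun i _ => by ring
    have hnorm : α ⬝ᵥ α = ∑ i, α i ^ 2 := by simp only [dotProduct, sq]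
    rw [add_mulVec, dotProduct_add, hdiag, Finset.sum_add_distrib, ← Finset.sum_mul, ← hnorm]
    linarith

/-- `Σᵢ αᵢ² ≤ f(α) · (Σᵢₖⱼ αᵢ (L+hI−iα)⁻¹ᵢₖ (L+hI+iα)⁻¹ₖⱼ αⱼ)^{1/2}`, where
`f(α) = (αᵗ((L+hI)² + α²)α)^{1/2}`; moreover
`f(α) ≤ (Σᵢ (αᵢ²(l_max+h)² + αᵢ⁴))^{1/2}` where `l_max` is the largest eigenvalue of `L`. -/
theorem alpha_squared_bound (N : ℕ) (hN : 0 < N)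
    (L : Matrix (Fin N) (Fin N) ℝ) (hLsymm : L.IsSymm) (hLpsd : L.PosSemidef)
    (h : ℝ) (hh : 0 < h) (α : Fin N → ℝ)
    (lmax : ℝ) (hlmax : IsGreatest (Set.range hLpsd.1.eigenvalues) lmax) :
    (∑ i, (α i) ^ 2
      ≤ Real.sqrt (α ⬝ᵥ ((L + h • (1 : Matrix (Fin N) (Fin N) ℝ))
            * (L + h • (1 : Matrix (Fin N) (Fin N) ℝ))
          + Matrix.diagonal α * Matrix.diagonal α).mulVec α)
        * Real.sqrt ((∑ i, ∑ k, ∑ j, (α i : ℂ) *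
            ((L.map (fun x => (x : ℂ)) + (h : ℂ) • 1
                - Complex.I • Matrix.diagonal (fun i => (α i : ℂ)))⁻¹ i k) *
            ((L.map (fun x => (x : ℂ)) + (h : ℂ) • 1
                + Complex.I • Matrix.diagonal (fun i => (α i : ℂ)))⁻¹ k j) * (α j : ℂ)).re))
    ∧ Real.sqrt (α ⬝ᵥ ((L + h • (1 : Matrix (Fin N) (Fin N) ℝ))
            * (L + h • (1 : Matrix (Fin N) (Fin N) ℝ))
          + Matrix.diagonal α * Matrix.diagonal α).mulVec α)
      ≤ Real.sqrt (∑ i, ((α i) ^ 2 * (lmax + h) ^ 2 + (α i) ^ 4)) :=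
  alpha_squared_bound_general N L hLpsd h hh α lmax hlmax
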